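/- Let a_0,…,a_n be complex numbers with a_n ≠ 0, and for ζ ≠ 0 let d_0(ζ),…,d_n(ζ) be the unique solution of the linear system Σ_{l=0}^{n−k} ζ^{k·2^l} d_l(ζ) = a_k for k = 0,…,n (this system is triangular in the sense that the k-th equation involves only d_0,…,d_{n−k}, so it has a unique solution for ζ ≠ 0). Then for each k, ζ^{(n−k)2^k} d_k(ζ) is asymptotic to (−1)^k a_n ζ^{−2^k+1} as ζ → 0, i.e. lim_{ζ→0} ζ^{(n−k)2^k + 2^k − 1} d_k(ζ) = (−1)^k a_n. -/

import Mathlib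

/-!
Read from the bottom, the system is triangular: equation `n - m` determines `d_m` from
`d_0, …, d_{m-1}` through its diagonal coefficient `ζ^{(n-m)2^m} ≠ 0`.

For the asymptotics put `e_k(ζ) = ζ^{(n-k)2^k + 2^k - 1} d_k(ζ)`. Multiplying equation `n - k`
by `ζ^{2^k - 1}` gives
`e_k = ζ^{2^k - 1} a_{n-k} - ∑_{l<k} ζ^{2^k - (k-l+1)2^l} e_l`,
and since `(j+1) 2^l ≤ 2^{j+l}`, with equality only for `j ≤ 1`, all exponents are natural
numbers and only the term `l = k - 1` survives as `ζ → 0`. Hence `e_0 = a_n` and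
`lim e_k = -lim e_{k-1}`.
-/

open Filter Finset Topology
open Fin.NatCast

section Triangular

variable {K : Type*} [Field K]

/-- Forward substitution for the lower triangular system `∑_{l ≤ m} A m l * d l = b m`. -/
noncomputable def triangularSolve (A : ℕ → ℕ → K) (b : ℕ → K) : ℕ → K
  | m => (A m m)⁻¹ * (b m - ∑ l ∈ (range m).attach, A m l * triangularSolve A b l)
  decreasing_by exact mem_range.mp l.2

variable {A : ℕ → ℕ → K} {b : ℕ → K}

theorem sum_mul_triangularSolve {m : ℕ} (hA : A m m ≠ 0) :
    ∑ l ∈ range (m + 1), A m l * triangularSolve A b l = b m := by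
  rw [sum_range_succ, triangularSolve, sum_attach (range m) fun l => A m l * triangularSolve A b l,
    ← mul_assoc, mul_inv_cancel₀ hA, one_mul, add_sub_cancel]

theorem eq_of_triangular_system (hA : ∀ m, A m m ≠ 0) {N : ℕ} {d d' : ℕ → K}
    (hd : ∀ m ≤ N, ∑ l ∈ range (m + 1), A m l * d l = b m)
    (hd' : ∀ m ≤ N, ∑ l ∈ range (m + 1), A m l * d' l = b m) :
    ∀ m ≤ N, d m = d' m := by
  intro m
  induction m using Nat.strong_induction_on with
  | _ m ih =>
  intro hm
  have hlower : ∑ l ∈ range m, A m l * d l = ∑ l ∈ range m, A m l * d' l :=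
    sum_congr rfl fun l hl => by rw [ih l (mem_range.mp hl) (by grind)]
  have hdiag := (hd m hm).trans (hd' m hm).symm
  rw [sum_range_succ, sum_range_succ, hlower, add_right_inj] at hdiag
  exact mul_left_cancel₀ (hA m) hdiag

end Triangular

theorem sub_add_one_mul_two_pow_le {k l : ℕ} (h : l ≤ k) : (k - l + 1) * 2 ^ l ≤ 2 ^ k := by
  obtain ⟨i, rfl⟩ := Nat.exists_eq_add_of_le h
  rw [Nat.add_sub_cancel_left, pow_add, mul_comm (2 ^ l)]
  exact Nat.mul_le_mul_right _ Nat.lt_two_pow_self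

theorem sub_add_one_mul_two_pow_lt {k l : ℕ} (h : l + 2 ≤ k) : (k - l + 1) * 2 ^ l < 2 ^ k := by
  obtain ⟨i, rfl⟩ := Nat.exists_eq_add_of_le h
  have hi : i + 3 < 2 ^ (i + 2) := by
    have := Nat.lt_two_pow_self (n := i + 1)
    rw [pow_succ]
    omega
  rw [show l + 2 + i - l + 1 = i + 3 by omega, show l + 2 + i = (i + 2) + l by omega, pow_add]
  exact Nat.mul_lt_mul_of_pos_right hi (by positivity)

section ContractionSystem

variable {K : Type*} [Field K]

def IsContractionSolution (n : ℕ) (a : ℕ → K) (ζ : K) (d : ℕ → K) : Prop :=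
  ∀ k ≤ n, ∑ l ∈ range (n - k + 1), ζ ^ (k * 2 ^ l) * d l = a k

def rescaledCoeff (n : ℕ) (ζ : K) (d : ℕ → K) (k : ℕ) : K :=
  ζ ^ ((n - k) * 2 ^ k + 2 ^ k - 1) * d k

variable {n : ℕ} {a : ℕ → K} {ζ : K} {d : ℕ → K}

theorem isContractionSolution_iff_triangular :
    IsContractionSolution n a ζ d ↔
      ∀ m ≤ n, ∑ l ∈ range (m + 1), ζ ^ ((n - m) * 2 ^ l) * d l = a (n - m) := by
  refine ⟨fun h m hm => ?_, fun h k hk => ?_⟩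
  · simpa [Nat.sub_sub_self hm] using h (n - m) (Nat.sub_le n m)
  · simpa [Nat.sub_sub_self hk] using h (n - k) (Nat.sub_le n k)

theorem isContractionSolution_iff_forall_fin (dv : Fin (n + 1) → K) :
    IsContractionSolution n a ζ (fun l : ℕ => dv l) ↔
      ∀ k : Fin (n + 1),
        ∑ l ∈ range (n - (k : ℕ) + 1), ζ ^ ((k : ℕ) * 2 ^ l) * dv (l : Fin (n + 1)) = a k := by
  refine ⟨fun h k => h k (Nat.lt_succ_iff.mp k.isLt), fun h k hk => ?_⟩
  simpa [Fin.val_cast_of_lt (Nat.lt_succ_of_le hk)] using h (k : Fin (n + 1))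

theorem rescaledCoeff_eq (hd : IsContractionSolution n a ζ d) {k : ℕ} (hk : k ≤ n) :
    rescaledCoeff n ζ d k = ζ ^ (2 ^ k - 1) * a (n - k) -
      ∑ l ∈ range k, ζ ^ (2 ^ k - (k - l + 1) * 2 ^ l) * rescaledCoeff n ζ d l := by
  have hrow := (isContractionSolution_iff_triangular.mp hd) k hk
  rw [sum_range_succ] at hrow
  have hexp : ∀ l ≤ k, 2 ^ k - 1 + (n - k) * 2 ^ l
      = 2 ^ k - (k - l + 1) * 2 ^ l + ((n - l) * 2 ^ l + 2 ^ l - 1) := by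
    intro l hl
    have hle := sub_add_one_mul_two_pow_le hl
    have hsplit : (n - l) * 2 ^ l = (n - k) * 2 ^ l + (k - l) * 2 ^ l := by
      rw [← Nat.add_mul]; congr 1; omega
    have hpos : 1 ≤ 2 ^ l := Nat.one_le_two_pow
    grind
  have hterm : ∀ l ≤ k, ζ ^ (2 ^ k - 1) * (ζ ^ ((n - k) * 2 ^ l) * d l)
      = ζ ^ (2 ^ k - (k - l + 1) * 2 ^ l) * rescaledCoeff n ζ d l := by
    intro l hl
    rw [rescaledCoeff, ← mul_assoc, ← mul_assoc, ← pow_add, ← pow_add, hexp l hl]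
  have hdiag := hterm k le_rfl
  rw [Nat.sub_self, zero_add, one_mul, Nat.sub_self, pow_zero, one_mul] at hdiag
  rw [← hdiag, ← hrow, mul_add, mul_sum,
    sum_congr rfl fun l hl => hterm l (mem_range.mp hl).le]
  ring

theorem existsUnique_isContractionSolution (hζ : ζ ≠ 0) :
    ∃! dv : Fin (n + 1) → K, IsContractionSolution n a ζ (fun l : ℕ => dv l) := by
  set A : ℕ → ℕ → K := fun m l => ζ ^ ((n - m) * 2 ^ l)
  have hA : ∀ m, A m m ≠ 0 := fun m => pow_ne_zero _ hζ
  refine ⟨fun i => triangularSolve A (fun m => a (n - m)) i, ?_, fun dv hdv => ?_⟩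
  · beta_reduce
    rw [isContractionSolution_iff_triangular]
    intro m hm
    convert sum_mul_triangularSolve (b := fun m => a (n - m)) (hA m) using 2 with l hl
    rw [Fin.val_cast_of_lt (by grind)]
  · beta_reduce at hdv
    rw [isContractionSolution_iff_triangular] at hdv
    funext i
    simpa using eq_of_triangular_system hA hdv (fun m _ => sum_mul_triangularSolve (hA m)) i
      (Nat.lt_succ_iff.mp i.isLt)

end ContractionSystem

theorem tendsto_pow_mul_of_tendsto {R : Type*} [Semiring R] [TopologicalSpace R]
    [IsTopologicalSemiring R] {l : Filter R} (hl : l ≤ 𝓝 0) {p : ℕ} (hp : p ≠ 0) {f : R → R}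
    {c : R} (hf : Tendsto f l (𝓝 c)) : Tendsto (fun ζ => ζ ^ p * f ζ) l (𝓝 0) := by
  have hpow : Tendsto (fun ζ : R => ζ ^ p) l (𝓝 0) :=
    ((continuous_pow p).tendsto' 0 0 (zero_pow hp)).mono_left hl
  simpa using hpow.mul hf

section Asymptotics

variable {𝕜 : Type*} [Field 𝕜] [TopologicalSpace 𝕜] [IsTopologicalRing 𝕜] {n : ℕ} {a : ℕ → 𝕜}

theorem tendsto_rescaledCoeff {d : 𝕜 → ℕ → 𝕜}
    (hd : ∀ᶠ ζ in 𝓝[≠] 0, IsContractionSolution n a ζ (d ζ)) {k : ℕ} (hk : k ≤ n) :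
    Tendsto (fun ζ => rescaledCoeff n ζ (d ζ) k) (𝓝[≠] 0) (𝓝 ((-1) ^ k * a n)) := by
  induction k using Nat.strong_induction_on with
  | _ k ih =>
  refine Tendsto.congr' (hd.mono fun ζ hζ => (rescaledCoeff_eq hζ hk).symm) ?_
  rcases k with _ | j
  · simpa using tendsto_const_nhds
  have hlast : 2 ^ (j + 1) - (j + 1 - j + 1) * 2 ^ j = 0 := by
    rw [show j + 1 - j + 1 = 2 by omega, pow_succ, mul_comm, Nat.sub_self]
  simp only [sum_range_succ, hlast, pow_zero, one_mul]
  have hfirst : Tendsto (fun ζ : 𝕜 => ζ ^ (2 ^ (j + 1) - 1) * a (n - (j + 1))) (𝓝[≠] 0) (𝓝 0) :=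
    tendsto_pow_mul_of_tendsto nhdsWithin_le_nhds
      (by have := Nat.one_lt_two_pow (n := j + 1) (by omega); omega) tendsto_const_nhds
  have hlower : Tendsto (fun ζ : 𝕜 => ∑ l ∈ range j,
      ζ ^ (2 ^ (j + 1) - (j + 1 - l + 1) * 2 ^ l) * rescaledCoeff n ζ (d ζ) l)
      (𝓝[≠] 0) (𝓝 0) := by
    simpa using tendsto_finsetSum (range j) fun l hl =>
      tendsto_pow_mul_of_tendsto nhdsWithin_le_nhds
        (Nat.sub_ne_zero_of_lt (sub_add_one_mul_two_pow_lt (by grind)))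
        (ih l (by grind) (by grind))
  have hprev := ih j (by omega) (by omega)
  convert hfirst.sub (hlower.add hprev) using 2
  ring

end Asymptotics

theorem stmt7_general (n : ℕ) (a : ℕ → ℂ) :
    (∀ ζ : ℂ, ζ ≠ 0 →
      ∃! dv : Fin (n + 1) → ℂ,
        ∀ k : Fin (n + 1),
          ∑ l ∈ Finset.range (n - (k : ℕ) + 1),
            ζ ^ ((k : ℕ) * 2 ^ l) * dv (l : Fin (n + 1)) = a (k : ℕ)) ∧
    (∀ d : ℂ → ℕ → ℂ,
      (∀ ζ : ℂ, ζ ≠ 0 → ∀ k : ℕ, k ≤ n →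
        ∑ l ∈ Finset.range (n - k + 1), ζ ^ (k * 2 ^ l) * d ζ l = a k) →
      ∀ k : ℕ, k ≤ n →
        Filter.Tendsto (fun ζ : ℂ => ζ ^ ((n - k) * 2 ^ k + 2 ^ k - 1) * d ζ k)
          (𝓝[≠] (0 : ℂ)) (𝓝 ((-1) ^ k * a n))) := by
  refine ⟨fun ζ hζ => ?_, fun d hd k hk => ?_⟩
  · exact (existsUnique_congr isContractionSolution_iff_forall_fin).mp
      (existsUnique_isContractionSolution hζ)
  · exact tendsto_rescaledCoeff (eventually_mem_nhdsWithin.mono hd) hk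

/-- For `a_n ≠ 0`, the triangular linear system
`∑_{l=0}^{n-k} ζ^{k·2^l} d_l(ζ) = a_k` (`k = 0,…,n`) has a unique solution for every
`ζ ≠ 0`, and each solution satisfies the asymptotics
`ζ^{(n−k)2^k} d_k(ζ) ∼ (−1)^k a_n ζ^{−2^k+1}` as `ζ → 0`, i.e.
`lim_{ζ→0} ζ^{(n−k)2^k + 2^k − 1} d_k(ζ) = (−1)^k a_n`. -/
theorem stmt7 (n : ℕ) (a : ℕ → ℂ) (han : a n ≠ 0) :
    (∀ ζ : ℂ, ζ ≠ 0 →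
      ∃! dv : Fin (n + 1) → ℂ,
        ∀ k : Fin (n + 1),
          ∑ l ∈ Finset.range (n - (k : ℕ) + 1),
            ζ ^ ((k : ℕ) * 2 ^ l) * dv (l : Fin (n + 1)) = a (k : ℕ)) ∧
    (∀ d : ℂ → ℕ → ℂ,
      (∀ ζ : ℂ, ζ ≠ 0 → ∀ k : ℕ, k ≤ n →
        ∑ l ∈ Finset.range (n - k + 1), ζ ^ (k * 2 ^ l) * d ζ l = a k) →
      ∀ k : ℕ, k ≤ n →
        Filter.Tendsto (fun ζ : ℂ => ζ ^ ((n - k) * 2 ^ k + 2 ^ k - 1) * d ζ k)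
          (𝓝[≠] (0 : ℂ)) (𝓝 ((-1) ^ k * a n))) :=
  stmt7_general n a
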